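/- arXiv:1607.07840 — 4 statements merged into one kernel-verified Lean document; each statement's English description precedes it below -/
import Mathlib

section
/- Let A be an m×m complex matrix that is asymptotically stable (every eigenvalue of A has negative real part) and let Q be an m×m Hermitian complex matrix. Then the function t ↦ exp(tA) · Q · exp(tA†) is integrable on [0,∞), the matrix P := ∫₀^∞ exp(tA) Q exp(tA†) dt is Hermitian, and P satisfies the Lyapunov equation A·P + P·A† + Q = 0. -/
open MeasureTheory NormedSpace Matrix
open scoped ComplexOrder
open Filter Topology

/-!
Every eigenvalue of `exp A` is `exp ν` for an eigenvalue `ν` of `A` (look at a common eigenvector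
of the commuting matrices `A` and `exp A`), so the spectral radius of `exp A` is `< 1`. By Gelfand's
formula some power `exp (N • A)` has norm `< 1`, and hence `‖exp (t • A)‖` decays exponentially.
The integrand `f t = exp (t • A) * Q * (exp (t • A))ᴴ` is then integrable on `[0, ∞)` and tends to
`0`, and since `f' = A * f + f * Aᴴ`, integrating the derivative gives `A * P + P * Aᴴ = -f 0 = -Q`.
Each `f t` is Hermitian, hence so is `P`.
-/

theorem norm_mul_pow_le {α : Type*} [SeminormedRing α] (x y : α) (n : ℕ) :
    ‖x * y ^ n‖ ≤ ‖x‖ * ‖y‖ ^ n := by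
  induction n with
  | zero => simp
  | succ n ih =>
    rw [pow_succ, ← mul_assoc, pow_succ, ← mul_assoc]
    exact (norm_mul_le _ _).trans (by gcongr)

section ExpDecay

variable {𝔸 : Type*} [NormedRing 𝔸]

theorem exists_norm_exp_smul_le_of_norm_exp_lt_one [NormedAlgebra ℝ 𝔸] [CompleteSpace 𝔸]
    {a : 𝔸} (ha : ‖exp a‖ < 1) :
    ∃ C ε : ℝ, 0 ≤ C ∧ 0 < ε ∧ ∀ t : ℝ, 0 ≤ t → ‖exp (t • a)‖ ≤ C * Real.exp (-ε * t) := by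
  -- `exp_nsmul` and `exp_add_of_commute` are stated for normed `ℚ`-algebras
  let : NormedAlgebra ℚ 𝔸 := .restrictScalars ℚ ℝ 𝔸
  -- the contraction factor is kept positive so that its logarithm is meaningful
  set q := max ‖exp a‖ (1 / 2)
  have hq0 : 0 < q := lt_max_of_lt_right one_half_pos
  set ε := -Real.log q with hε
  have hε0 : 0 < ε := neg_pos.mpr (Real.log_neg hq0 (max_lt ha one_half_lt_one))
  have hqε : q = Real.exp (-ε) := by rw [hε, neg_neg, Real.exp_log hq0]
  obtain ⟨M, hM⟩ := (isCompact_Icc (a := (0 : ℝ)) (b := 1)).exists_bound_of_continuousOn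
    (differentiable_exp_smul_const ℝ a).continuous.continuousOn
  have hM0 : 0 ≤ M := (norm_nonneg _).trans (hM 0 ⟨le_rfl, zero_le_one⟩)
  refine ⟨M * Real.exp ε, ε, by positivity, hε0, fun t ht => ?_⟩
  set n := ⌊t⌋₊
  have hsplit : exp (t • a) = exp ((t - n) • a) * exp a ^ n := by
    rw [← NormedSpace.exp_nsmul, ← Nat.cast_smul_eq_nsmul ℝ, ← NormedSpace.exp_add_of_commute
      ((Commute.refl a).smul_left _ |>.smul_right _), ← add_smul, sub_add_cancel]
  have hfrac : t - n ∈ Set.Icc (0 : ℝ) 1 :=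
    ⟨sub_nonneg.mpr (Nat.floor_le ht), by linarith [Nat.lt_floor_add_one t]⟩
  have hpow : q ^ n ≤ Real.exp ε * Real.exp (-ε * t) := by
    rw [hqε, ← Real.exp_nat_mul, ← Real.exp_add]
    exact Real.exp_le_exp.mpr (by nlinarith [Nat.lt_floor_add_one t])
  calc ‖exp (t • a)‖ ≤ ‖exp ((t - n) • a)‖ * ‖exp a‖ ^ n := hsplit ▸ norm_mul_pow_le _ _ _
    _ ≤ M * q ^ n := by gcongr; exacts [hM _ hfrac, le_max_left _ _]
    _ ≤ _ := by rw [mul_assoc]; gcongr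

theorem hasDerivAt_exp_smul_mul_mul_exp_smul [NormedAlgebra ℝ 𝔸] [CompleteSpace 𝔸] (a q b : 𝔸)
    (t : ℝ) :
    HasDerivAt (fun u : ℝ => exp (u • a) * q * exp (u • b))
      (a * (exp (t • a) * q * exp (t • b)) + exp (t • a) * q * exp (t • b) * b) t := by
  refine (((hasDerivAt_exp_smul_const' a t).mul_const q).mul
    (hasDerivAt_exp_smul_const b t)).congr_deriv ?_
  simp only [mul_assoc]

theorem exists_norm_pow_lt_one_of_spectralRadius_lt_one [NormedAlgebra ℂ 𝔸] [CompleteSpace 𝔸]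
    {b : 𝔸} (hb : spectralRadius ℂ b < 1) : ∃ n : ℕ, 0 < n ∧ ‖b ^ n‖ < 1 := by
  obtain ⟨n, hn⟩ := ((spectrum.pow_nnnorm_pow_one_div_tendsto_nhds_spectralRadius b).eventually
    (gt_mem_nhds hb)).exists_forall_of_atTop
  refine ⟨n + 1, n.succ_pos, ?_⟩
  refine not_le.mp fun h => (hn (n + 1) n.le_succ).not_ge (ENNReal.one_le_rpow ?_ (by positivity))
  exact_mod_cast h

theorem exists_norm_exp_smul_le_of_spectralRadius_exp_lt_one [NormedAlgebra ℂ 𝔸] [CompleteSpace 𝔸]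
    {a : 𝔸} (ha : spectralRadius ℂ (exp a) < 1) :
    ∃ C ε : ℝ, 0 ≤ C ∧ 0 < ε ∧ ∀ t : ℝ, 0 ≤ t → ‖exp (t • a)‖ ≤ C * Real.exp (-ε * t) := by
  let : NormedAlgebra ℚ 𝔸 := .restrictScalars ℚ ℂ 𝔸
  obtain ⟨n, hn, hlt⟩ := exists_norm_pow_lt_one_of_spectralRadius_lt_one ha
  rw [← NormedSpace.exp_nsmul] at hlt
  obtain ⟨C, ε, hC0, hε, hC⟩ := exists_norm_exp_smul_le_of_norm_exp_lt_one hlt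
  refine ⟨C, ε / n, hC0, by positivity, fun t ht => ?_⟩
  have := hC (t / n) (by positivity)
  rw [← Nat.cast_smul_eq_nsmul ℝ, smul_smul, div_mul_cancel₀ _ (by positivity)] at this
  convert this using 3
  ring

end ExpDecay

theorem Module.End.exists_hasEigenvector_of_commute {K V : Type*} [Field K] [IsAlgClosed K]
    [AddCommGroup V] [Module K V] [FiniteDimensional K V] {f g : Module.End K V}
    (hfg : Commute f g) {μ : K} (hμ : g.HasEigenvalue μ) :
    ∃ ν v, f.HasEigenvector ν v ∧ g.HasEigenvector μ v := by
  have hmaps : Set.MapsTo f (g.eigenspace μ) (g.eigenspace μ) :=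
    mapsTo_genEigenspace_of_comm hfg.symm μ 1
  have : Nontrivial (g.eigenspace μ) := Submodule.nontrivial_iff_ne_bot.mpr hμ
  obtain ⟨ν, hν⟩ := Module.End.exists_eigenvalue (f.restrict hmaps)
  obtain ⟨w, hw⟩ := hν.exists_hasEigenvector
  have hw0 : (w : V) ≠ 0 := by simpa using hw.2
  refine ⟨ν, w, ⟨mem_eigenspace_iff.mpr ?_, hw0⟩, ⟨w.2, hw0⟩⟩
  exact congrArg Subtype.val hw.apply_eq_smul

section FrobeniusNorm

/- The Frobenius norm is submultiplicative, invariant under `ᴴ` and dominates every entry; it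
carries the decay of `exp (t • A)` over to the entrywise sup norm used in the statement. -/
open scoped Matrix.Norms.Frobenius

theorem Matrix.norm_entry_le_frobenius_norm {m n α : Type*} [Fintype m] [Fintype n]
    [SeminormedAddCommGroup α] (M : Matrix m n α) (i : m) (j : n) : ‖M i j‖ ≤ ‖M‖ :=
  (PiLp.norm_apply_le (WithLp.toLp 2 (M i)) j).trans
    (PiLp.norm_apply_le (WithLp.toLp 2 fun i => WithLp.toLp 2 (M i)) i)

variable {n : Type*} [Fintype n] [DecidableEq n]

theorem Matrix.pow_mulVec_of_mulVec_eq_smul {R : Type*} [CommSemiring R] {A : Matrix n n R}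
    {ν : R} {v : n → R} (h : A *ᵥ v = ν • v) (k : ℕ) : (A ^ k) *ᵥ v = ν ^ k • v := by
  induction k with
  | zero => simp
  | succ k ih => rw [pow_succ', ← mulVec_mulVec, ih, mulVec_smul, h, smul_smul, pow_succ]

theorem Matrix.exp_mulVec_of_mulVec_eq_smul {A : Matrix n n ℂ} {ν : ℂ} {v : n → ℂ}
    (h : A *ᵥ v = ν • v) : exp A *ᵥ v = Complex.exp ν • v := by
  have hA := (exp_series_hasSum_exp' (𝕂 := ℂ) A).map (mulVec.addMonoidHomLeft v)
    (continuous_id.matrix_mulVec continuous_const)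
  have hν := (exp_series_hasSum_exp' (𝕂 := ℂ) ν).smul_const v
  rw [← Complex.exp_eq_exp_ℂ] at hν
  refine hA.unique (hν.congr_fun fun k => ?_)
  simp [mulVec.addMonoidHomLeft, smul_mulVec, pow_mulVec_of_mulVec_eq_smul h, smul_smul]

theorem Matrix.spectrum_exp_subset (A : Matrix n n ℂ) :
    spectrum ℂ (exp A) ⊆ Complex.exp '' spectrum ℂ A := by
  intro μ hμ
  rw [← spectrum_toLin', ← Module.End.hasEigenvalue_iff_mem_spectrum] at hμ
  have hcomm : Commute A.toLin' (exp A).toLin' :=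
    ((Commute.refl A).exp_right).map toLinAlgEquiv'
  obtain ⟨ν, v, hA, hexp⟩ := Module.End.exists_hasEigenvector_of_commute hcomm hμ
  refine ⟨ν, ?_, ?_⟩
  · rw [← spectrum_toLin', ← Module.End.hasEigenvalue_iff_mem_spectrum]
    exact Module.End.hasEigenvalue_of_hasEigenvector hA
  · have h := exp_mulVec_of_mulVec_eq_smul (by simpa using hA.apply_eq_smul)
    have h' : exp A *ᵥ v = μ • v := by simpa using hexp.apply_eq_smul
    exact smul_left_injective ℂ hA.2 (h.symm.trans h')

theorem Matrix.spectralRadius_exp_lt_one {A : Matrix n n ℂ}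
    (hA : ∀ μ ∈ spectrum ℂ A, μ.re < 0) :
    spectralRadius ℂ (exp A) < 1 := by
  rcases (spectrum ℂ (exp A)).eq_empty_or_nonempty with h | h
  · simp [spectralRadius, h]
  · refine spectrum.spectralRadius_lt_of_forall_lt_of_nonempty h fun μ hμ => ?_
    obtain ⟨ν, hν, rfl⟩ := spectrum_exp_subset A hμ
    rw [← NNReal.coe_lt_coe, coe_nnnorm, Complex.norm_exp, NNReal.coe_one]
    exact Real.exp_lt_one_iff.mpr (hA ν hν)

theorem Matrix.exists_norm_exp_smul_mul_mul_conjTranspose_entry_le {A : Matrix n n ℂ}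
    (hA : ∀ μ ∈ spectrum ℂ A, μ.re < 0) (Q : Matrix n n ℂ) :
    ∃ K ε : ℝ, 0 ≤ K ∧ 0 < ε ∧ ∀ t : ℝ, 0 ≤ t → ∀ i j,
      ‖(exp (t • A) * Q * (exp (t • A))ᴴ) i j‖ ≤ K * Real.exp (-ε * t) := by
  obtain ⟨C, ε, hC, hε, hexp⟩ :=
    exists_norm_exp_smul_le_of_spectralRadius_exp_lt_one (a := A) (spectralRadius_exp_lt_one hA)
  refine ⟨C * ‖Q‖ * C, 2 * ε, by positivity, by positivity, fun t ht i j => ?_⟩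
  calc ‖(exp (t • A) * Q * (exp (t • A))ᴴ) i j‖ ≤ ‖exp (t • A) * Q * (exp (t • A))ᴴ‖ :=
        norm_entry_le_frobenius_norm _ i j
    _ ≤ ‖exp (t • A)‖ * ‖Q‖ * ‖exp (t • A)‖ := by
        grw [norm_mul_le, norm_mul_le, frobenius_norm_conjTranspose]
    _ ≤ C * Real.exp (-ε * t) * ‖Q‖ * (C * Real.exp (-ε * t)) := by gcongr <;> exact hexp t ht
    _ = C * ‖Q‖ * C * Real.exp (-(2 * ε) * t) := by
        rw [show -(2 * ε) * t = -ε * t + -ε * t by ring, Real.exp_add]; ring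

theorem Matrix.hasDerivAt_exp_smul_mul_mul_conjTranspose (A Q : Matrix n n ℂ) (t : ℝ) :
    HasDerivAt (fun u : ℝ => exp (u • A) * Q * (exp (u • A))ᴴ)
      (A * (exp (t • A) * Q * (exp (t • A))ᴴ) + exp (t • A) * Q * (exp (t • A))ᴴ * Aᴴ) t := by
  have hconj (u : ℝ) : (exp (u • A))ᴴ = exp (u • Aᴴ) := by
    rw [← exp_conjTranspose, conjTranspose_smul, star_trivial]
  simp only [hconj]
  exact hasDerivAt_exp_smul_mul_mul_exp_smul A Q Aᴴ t

end FrobeniusNorm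

section ExpDecayIntegral

variable {E : Type*} [NormedAddCommGroup E] {f : ℝ → E} {K ε : ℝ}

theorem integrableOn_Ici_of_norm_le_mul_exp (hε : 0 < ε) (hf : ContinuousOn f (Set.Ici 0))
    (hbound : ∀ t, 0 ≤ t → ‖f t‖ ≤ K * Real.exp (-ε * t)) : IntegrableOn f (Set.Ici 0) := by
  have hexp : IntegrableOn (fun t => Real.exp (-ε * t)) (Set.Ici 0) :=
    (integrableOn_Ici_iff_integrableOn_Ioi (by finiteness)).mpr (exp_neg_integrableOn_Ioi 0 hε)
  refine (hexp.const_mul K).mono' (hf.aestronglyMeasurable measurableSet_Ici) ?_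
  filter_upwards [ae_restrict_mem measurableSet_Ici] with t ht using hbound t ht

theorem tendsto_zero_of_norm_le_mul_exp (hε : 0 < ε)
    (hbound : ∀ t, 0 ≤ t → ‖f t‖ ≤ K * Real.exp (-ε * t)) : Tendsto f atTop (𝓝 0) := by
  have hexp : Tendsto (fun t => K * Real.exp (-ε * t)) atTop (𝓝 0) := by
    simpa [neg_mul] using
      (Real.tendsto_exp_neg_atTop_nhds_zero.comp (tendsto_id.const_mul_atTop hε)).const_mul K
  exact squeeze_zero_norm' ((eventually_ge_atTop 0).mono hbound) hexp

end ExpDecayIntegral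

theorem ContinuousLinearMap.apply_integral_Ici_eq_neg_of_hasDerivAt {E : Type*}
    [NormedAddCommGroup E] [NormedSpace ℝ E] [CompleteSpace E] (L : E →L[ℝ] E) {f : ℝ → E} {a : ℝ}
    (hderiv : ∀ t ∈ Set.Ici a, HasDerivAt f (L (f t)) t) (hint : IntegrableOn f (Set.Ici a))
    (hlim : Tendsto f atTop (𝓝 0)) : L (∫ t in Set.Ici a, f t) = -f a := by
  have hint' : IntegrableOn f (Set.Ioi a) := hint.mono_set Set.Ioi_subset_Ici_self
  rw [integral_Ici_eq_integral_Ioi, ← L.integral_comp_comm hint',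
    integral_Ioi_of_hasDerivAt_of_tendsto' hderiv (L.integrable_comp hint') hlim, zero_sub]

attribute [local instance] Matrix.normedAddCommGroup Matrix.normedSpace

def IsAsymptoticallyStable {m : ℕ} (A : Matrix (Fin m) (Fin m) ℂ) : Prop :=
  ∀ μ ∈ spectrum ℂ A, μ.re < 0

theorem Matrix.conjTranspose_integral {X n 𝕜 : Type*} [MeasurableSpace X] {μ : Measure X}
    [Fintype n] [RCLike 𝕜] (f : X → Matrix n n 𝕜) :
    (∫ x, f x ∂μ)ᴴ = ∫ x, (f x)ᴴ ∂μ :=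
  ((starL' ℝ).integral_comp_comm f).symm

/-- For `A` asymptotically stable and `Q` Hermitian, the function
`t ↦ exp(tA) Q exp(tA)ᴴ` is integrable on `[0,∞)`, its integral `P` is Hermitian,
and `P` solves the Lyapunov equation `A P + P Aᴴ + Q = 0`. -/
theorem lyapunov_integral_solution {m : ℕ} (A Q : Matrix (Fin m) (Fin m) ℂ)
    (hA : IsAsymptoticallyStable A) (hQ : Q.IsHermitian) :
    @IntegrableOn ℝ (Matrix (Fin m) (Fin m) ℂ) _ _ SeminormedAddGroup.toContinuousENorm
      (fun t : ℝ => exp (t • A) * Q * (exp (t • A))ᴴ) (Set.Ici 0) volume ∧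
      (∫ t in Set.Ici (0 : ℝ), exp (t • A) * Q * (exp (t • A))ᴴ).IsHermitian ∧
      A * (∫ t in Set.Ici (0 : ℝ), exp (t • A) * Q * (exp (t • A))ᴴ) +
        (∫ t in Set.Ici (0 : ℝ), exp (t • A) * Q * (exp (t • A))ᴴ) * Aᴴ + Q = 0 := by
  let f : ℝ → Matrix (Fin m) (Fin m) ℂ := fun t => exp (t • A) * Q * (exp (t • A))ᴴ
  let L : Matrix (Fin m) (Fin m) ℂ →L[ℝ] Matrix (Fin m) (Fin m) ℂ :=
    (LinearMap.mulLeft ℝ A + LinearMap.mulRight ℝ Aᴴ).toContinuousLinearMap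
  have hderiv (t : ℝ) : HasDerivAt f (L (f t)) t :=
    hasDerivAt_exp_smul_mul_mul_conjTranspose A Q t
  obtain ⟨K, ε, hK, hε, hentry⟩ := exists_norm_exp_smul_mul_mul_conjTranspose_entry_le hA Q
  have hbound (t : ℝ) (ht : 0 ≤ t) : ‖f t‖ ≤ K * Real.exp (-ε * t) :=
    (norm_le_iff (by positivity)).mpr (hentry t ht)
  have hint := integrableOn_Ici_of_norm_le_mul_exp hε
    (continuous_iff_continuousAt.mpr fun t => (hderiv t).continuousAt).continuousOn hbound
  refine ⟨hint, ?_, ?_⟩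
  · have hherm (t : ℝ) : (f t)ᴴ = f t := by
      simp only [f, conjTranspose_mul, conjTranspose_conjTranspose, hQ.eq, mul_assoc]
    exact (conjTranspose_integral f).trans (congrArg _ (funext hherm))
  · have hL := L.apply_integral_Ici_eq_neg_of_hasDerivAt (fun t _ => hderiv t) hint
      (tendsto_zero_of_norm_le_mul_exp hε hbound)
    have hf0 : f 0 = Q := by simp [f]
    rw [hf0] at hL
    exact eq_neg_iff_add_eq_zero.mp hL
end

section
/- Let A be an m×m complex matrix that is asymptotically stable and let Q be an m×m complex matrix. If P₁ and P₂ are m×m complex matrices both satisfying A·Pᵢ + Pᵢ·A† + Q = 0 (i = 1,2), then P₁ = P₂. -/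
open Matrix

/-!
Subtracting the two equations, `D = P₁ - P₂` solves the Sylvester equation `A D = D (-Aᴴ)`.
The spectrum of `A` lies in the open left half-plane and that of `-Aᴴ` in the open right one.
For `p` the characteristic polynomial of `-Aᴴ`, the equation gives `p(A) D = D p(-Aᴴ) = 0` by
Cayley–Hamilton, while `p(A)` is invertible by the spectral mapping theorem, since no eigenvalue
of `A` is a root of `p`. Hence `D = 0`.
-/

open Polynomial

theorem SemiconjBy.aeval {R A : Type*} [CommSemiring R] [Semiring A] [Algebra R A] {x a b : A}
    (h : SemiconjBy x a b) (p : R[X]) : SemiconjBy x (aeval a p) (aeval b p) := by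
  induction p using Polynomial.induction_on' with
  | add p q hp hq => simpa only [map_add] using hp.add_right hq
  | monomial n r =>
    simpa only [aeval_monomial] using
      SemiconjBy.mul_right (Algebra.commute_algebraMap_right r x) (h.pow_right n)

section Sylvester

variable {𝕜 A : Type*} [Field 𝕜] [IsAlgClosed 𝕜] [Ring A] [Algebra 𝕜 A]

theorem spectrum.isUnit_aeval_of_forall_not_isRoot {a : A} {p : 𝕜[X]} (hp : p ≠ 0)
    (h : ∀ k ∈ spectrum 𝕜 a, ¬ p.IsRoot k) : IsUnit (aeval a p) := by
  rcases le_or_gt p.degree 0 with hdeg | hdeg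
  · rw [eq_C_of_degree_le_zero hdeg] at hp ⊢
    rw [aeval_C]
    exact (Ne.isUnit (C_ne_zero.mp hp)).map _
  · rw [← spectrum.zero_notMem_iff 𝕜, spectrum.map_polynomial_aeval_of_degree_pos a p hdeg]
    rintro ⟨k, hk, hroot⟩
    exact h k hk hroot

theorem eq_zero_of_mul_eq_mul_of_aeval_eq_zero {a b x : A} {p : 𝕜[X]} (hp : p ≠ 0)
    (hpb : aeval b p = 0) (hpa : ∀ k ∈ spectrum 𝕜 a, ¬ p.IsRoot k) (h : a * x = x * b) :
    x = 0 := by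
  have hpx : aeval a p * x = 0 := by
    rw [← (SemiconjBy.aeval h.symm p).eq, hpb, mul_zero]
  exact (spectrum.isUnit_aeval_of_forall_not_isRoot hp hpa).mul_right_eq_zero.mp hpx

theorem Matrix.eq_zero_of_mul_eq_mul_of_disjoint_spectrum {n : Type*} [Fintype n] [DecidableEq n]
    {A B X : Matrix n n 𝕜} (hAB : Disjoint (spectrum 𝕜 A) (spectrum 𝕜 B)) (h : A * X = X * B) :
    X = 0 :=
  eq_zero_of_mul_eq_mul_of_aeval_eq_zero B.charpoly_monic.ne_zero (aeval_self_charpoly B)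
    (fun _ hkA hroot ↦ Set.disjoint_left.mp hAB hkA (mem_spectrum_of_isRoot_charpoly hroot)) h

end Sylvester

theorem IsAsymptoticallyStable.disjoint_spectrum_neg_conjTranspose {m : ℕ}
    {A : Matrix (Fin m) (Fin m) ℂ} (hA : IsAsymptoticallyStable A) :
    Disjoint (spectrum ℂ A) (spectrum ℂ (-Aᴴ)) := by
  rw [← star_eq_conjTranspose, ← spectrum.neg_eq, spectrum.map_star]
  refine Set.disjoint_left.mpr fun μ hμ hμ' ↦ ?_
  have hre := hA _ (Set.mem_star.mp (Set.mem_neg.mp hμ'))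
  simp only [Complex.star_def, Complex.conj_re, Complex.neg_re] at hre
  linarith [hA μ hμ]

/-- For `A` asymptotically stable, solutions of the Lyapunov equation
`A P + P Aᴴ + Q = 0` are unique. -/
theorem lyapunov_solution_unique {m : ℕ} (A Q P₁ P₂ : Matrix (Fin m) (Fin m) ℂ)
    (hA : IsAsymptoticallyStable A)
    (h₁ : A * P₁ + P₁ * Aᴴ + Q = 0) (h₂ : A * P₂ + P₂ * Aᴴ + Q = 0) :
    P₁ = P₂ := by
  have hsylvester : A * (P₁ - P₂) = (P₁ - P₂) * -Aᴴ := by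
    rw [mul_neg, eq_neg_iff_add_eq_zero]
    calc A * (P₁ - P₂) + (P₁ - P₂) * Aᴴ
        = (A * P₁ + P₁ * Aᴴ + Q) - (A * P₂ + P₂ * Aᴴ + Q) := by noncomm_ring
      _ = 0 := by rw [h₁, h₂, sub_self]
  exact sub_eq_zero.mp
    (eq_zero_of_mul_eq_mul_of_disjoint_spectrum hA.disjoint_spectrum_neg_conjTranspose hsylvester)
end

section
/- Let A be an m×m complex matrix that is asymptotically stable and let Q be an m×m Hermitian complex matrix that is positive definite. Then the solution P(Q,A) = ∫₀^∞ exp(tA) Q exp(tA†) dt of the Lyapunov equation A·P + P·A† + Q = 0 is positive definite. -/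
open MeasureTheory NormedSpace Matrix
open scoped ComplexOrder

attribute [local instance] Matrix.normedAddCommGroup Matrix.normedSpace

/-- The integral solution `P(Q,A) = ∫₀^∞ exp(tA) Q exp(tA)ᴴ dt` of the Lyapunov
equation `A P + P Aᴴ + Q = 0`. -/
noncomputable def lyapunovSolution {m : ℕ} (Q A : Matrix (Fin m) (Fin m) ℂ) :
    Matrix (Fin m) (Fin m) ℂ :=
  ∫ t in Set.Ici (0 : ℝ), exp (t • A) * Q * (exp (t • A))ᴴ

/-!
Let every eigenvalue of `A` have real part `< -ε`. On a generalized eigenvector `v` for `μ`,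
`exp (t • A) *ᵥ v` is `exp (t * μ)` times a polynomial in `t`, so it is `O(exp (-ε * t))`; since
these vectors span `ℂᵐ`, `exp (t • A) = O(exp (-ε * t))`. The integrand
`exp (t • A) * Q * (exp (t • A))ᴴ` is then `O(exp (-2ε * t))`, hence integrable on `[0, ∞)`.
Each integrand is positive definite because `exp (t • A)` is invertible, and the integral of an
integrable positive definite family over a set of positive measure is positive definite.
-/

open Asymptotics Filter Set

theorem Asymptotics.IsBigO.smul_const {α 𝕜 E F : Type*} [NormedField 𝕜]
    [SeminormedAddCommGroup E] [NormedSpace 𝕜 E] [Norm F] {l : Filter α} {c : α → 𝕜}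
    {g : α → F} (h : c =O[l] g) (w : E) : (fun x => c x • w) =O[l] g :=
  (isBigO_of_le' (g := c) (c := ‖w‖) l fun _ => (norm_smul _ _).trans_le (mul_comm _ _).le).trans h

theorem Asymptotics.IsBigO.matrix_mul {α l m p R : Type*} [Fintype l] [Fintype m] [Fintype p]
    [NormedRing R] {F : Filter α} {f : α → Matrix l m R} {g : α → Matrix m p R} {u v : α → ℝ}
    (hf : f =O[F] u) (hg : g =O[F] v) : (fun x => f x * g x) =O[F] (u * v) :=
  isBigO_pi.2 fun i => isBigO_pi.2 fun j => IsBigO.fun_sum fun k _ =>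
    (isBigO_pi.1 (isBigO_pi.1 hf i) k).mul (isBigO_pi.1 (isBigO_pi.1 hg k) j)

theorem Asymptotics.IsBigO.matrix_conjTranspose {α m n R : Type*} [Fintype m] [Fintype n]
    [NormedRing R] [StarRing R] [NormedStarGroup R] {F : Filter α} {f : α → Matrix m n R}
    {u : α → ℝ} (hf : f =O[F] u) : (fun x => (f x)ᴴ) =O[F] u :=
  isBigO_norm_left.1 (by simpa only [Matrix.norm_conjTranspose] using hf.norm_left)

theorem isBigO_cexp_mul_pow_div_factorial {μ : ℂ} {ε : ℝ} (hμ : μ.re < -ε) (i : ℕ) :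
    (fun t : ℝ => Complex.exp (t * μ) * ((t : ℂ) ^ i / i.factorial)) =O[atTop]
      fun t => Real.exp (-ε * t) := by
  have hexp : (fun t : ℝ => Complex.exp (t * μ)) =O[atTop] fun t => Real.exp (μ.re * t) :=
    isBigO_of_le _ fun t => by simp [Complex.norm_exp, mul_comm]
  have hpow : (fun t : ℝ => (t : ℂ) ^ i) =O[atTop] fun t => Real.exp ((-ε - μ.re) * t) :=
    (isBigO_of_le _ fun t => by simp).trans
      (isLittleO_pow_exp_pos_mul_atTop i (b := -ε - μ.re) (by linarith)).isBigO
  refine (hexp.mul (hpow.const_mul_left (i.factorial : ℂ)⁻¹)).congr (fun t => ?_) (fun t => ?_)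
  · rw [div_eq_inv_mul]
  · rw [← Real.exp_add]; ring_nf

theorem integrableOn_Ici_of_isBigO_exp_neg {E : Type*} [NormedAddCommGroup E] {f : ℝ → E}
    {a b : ℝ} (hb : 0 < b) (hf : ContinuousOn f (Ici a))
    (ho : f =O[atTop] fun t => Real.exp (-b * t)) : IntegrableOn f (Ici a) :=
  (hf.locallyIntegrableOn measurableSet_Ici).integrableOn_of_isBigO_atTop ho
    ⟨Ioi b, Ioi_mem_atTop b, exp_neg_integrableOn_Ioi b hb⟩

theorem Complex.integral_pos_of_forall_pos {X : Type*} [MeasurableSpace X] {μ : Measure X}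
    [NeZero μ] {f : X → ℂ} (hf : Integrable f μ) (hpos : ∀ x, 0 < f x) :
    0 < ∫ x, f x ∂μ := by
  choose r hr hrf using fun x => RCLike.pos_iff_exists_ofReal.1 (hpos x)
  obtain rfl : f = fun x => (r x : ℂ) := funext fun x => (hrf x).symm
  have hr_int : Integrable r μ := by simpa using hf.re
  rw [integral_complex_ofReal, zero_lt_real,
    integral_pos_iff_support_of_nonneg (fun x => (hr x).le) hr_int]
  simpa [Function.support, (hr _).ne'] using NeZero.ne μ

namespace Matrix

variable {n : Type*} [Fintype n]

theorem IsHermitian.integral {X : Type*} [MeasurableSpace X] {μ : Measure X}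
    {f : X → Matrix n n ℂ} (hf : ∀ x, (f x).IsHermitian) : (∫ x, f x ∂μ).IsHermitian :=
  ((starL' ℝ : Matrix n n ℂ ≃L[ℝ] Matrix n n ℂ).integral_comp_comm f).symm.trans
    (integral_congr_ae (ae_of_all _ fun x => (hf x).eq))

theorem PosDef.setIntegral_Ici_of_isBigO_exp_neg {f : ℝ → Matrix n n ℂ} {a b : ℝ} (hb : 0 < b)
    (hf : Continuous f) (ho : f =O[atTop] fun t => Real.exp (-b * t))
    (hpos : ∀ t, (f t).PosDef) : (∫ t in Ici a, f t).PosDef := by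
  have hint := integrableOn_Ici_of_isBigO_exp_neg (a := a) hb hf.continuousOn ho
  refine posDef_iff_dotProduct_mulVec.2 ⟨IsHermitian.integral fun t => (hpos t).isHermitian,
    fun x hx => ?_⟩
  let quadraticForm : Matrix n n ℂ →ₗ[ℂ] ℂ :=
    { toFun := fun M => star x ⬝ᵥ (M *ᵥ x)
      map_add' := fun M N => by rw [add_mulVec, dotProduct_add]
      map_smul' := fun c M => by rw [smul_mulVec, dotProduct_smul]; rfl }
  have : NeZero (volume.restrict (Ici a)) := ⟨by simp [Measure.restrict_eq_zero]⟩
  exact (Complex.integral_pos_of_forall_pos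
    (quadraticForm.toContinuousLinearMap.integrable_comp hint)
    fun t => (hpos t).dotProduct_mulVec_pos hx).trans_eq
    (quadraticForm.toContinuousLinearMap.integral_comp_comm hint)

variable [DecidableEq n]

theorem pow_mulVec_eq_zero_of_le {R : Type*} [Semiring R] {N : Matrix n n R} {v : n → R}
    {k i : ℕ} (hv : N ^ k *ᵥ v = 0) (hki : k ≤ i) : N ^ i *ᵥ v = 0 := by
  rw [← Nat.sub_add_cancel hki, pow_add, ← mulVec_mulVec, hv, mulVec_zero]

theorem mem_spectrum_of_pow_sub_mulVec_eq_zero {K : Type*} [Field K] {A : Matrix n n K} {μ : K}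
    {k : ℕ} {v : n → K} (hv : (A - μ • 1) ^ k *ᵥ v = 0) (hv0 : v ≠ 0) : μ ∈ spectrum K A := by
  by_contra hμ
  rw [spectrum.notMem_iff, Algebra.algebraMap_eq_smul_one, ← neg_sub, IsUnit.neg_iff] at hμ
  exact hv0 (mulVec_injective_iff_isUnit.2 (hμ.pow k) (hv.trans (mulVec_zero _).symm))

-- `Matrix n n ℂ` carries no canonical ring norm; the operator norm from `Norms.Operator` makes
-- the Banach-algebra lemmas about `exp` available.
theorem continuous_exp : Continuous (exp : Matrix n n ℂ → Matrix n n ℂ) :=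
  open scoped Norms.Operator in NormedSpace.exp_continuous

theorem hasSum_exp_mulVec (M : Matrix n n ℂ) (v : n → ℂ) :
    HasSum (fun k => (k.factorial : ℂ)⁻¹ • (M ^ k *ᵥ v)) (exp M *ᵥ v) := by
  open scoped Norms.Operator in
  have hsum := (NormedSpace.exp_series_hasSum_exp' (𝕂 := ℂ) M).map
    (mulVec.addMonoidHomLeft v) (continuous_id.matrix_mulVec continuous_const)
  convert hsum using 2 with k
  · simp [mulVec.addMonoidHomLeft, smul_mulVec]
  · rfl

theorem exp_smul_one (c : ℂ) : exp (c • (1 : Matrix n n ℂ)) = Complex.exp c • 1 := by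
  rw [smul_one_eq_diagonal, exp_diagonal, smul_one_eq_diagonal, Pi.exp_def, Complex.exp_eq_exp_ℂ]

theorem exp_smul_mulVec_of_pow_sub_mulVec_eq_zero {A : Matrix n n ℂ} {μ : ℂ} {k : ℕ}
    {v : n → ℂ} (hv : (A - μ • 1) ^ k *ᵥ v = 0) (z : ℂ) :
    exp (z • A) *ᵥ v = Complex.exp (z * μ) •
      ∑ i ∈ Finset.range k, (z ^ i / i.factorial) • ((A - μ • 1) ^ i *ᵥ v) := by
  have hsplit : z • A = z • (A - μ • 1) + (z * μ) • 1 := by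
    rw [smul_sub, smul_smul]; abel
  rw [hsplit, exp_add_of_commute _ _ ((Commute.one_right _).smul_right _), exp_smul_one,
    mul_smul_comm, mul_one, smul_mulVec]
  congr 1
  have hterm (i : ℕ) : (i.factorial : ℂ)⁻¹ • ((z • (A - μ • 1)) ^ i *ᵥ v) =
      (z ^ i / i.factorial) • ((A - μ • 1) ^ i *ᵥ v) := by
    rw [smul_pow, smul_mulVec, smul_smul, div_eq_inv_mul]
  refine (hasSum_exp_mulVec _ v).unique ?_
  simp_rw [hterm]
  refine hasSum_sum_of_ne_finset_zero fun i hi => ?_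
  rw [pow_mulVec_eq_zero_of_le hv (by simpa using hi), smul_zero]

theorem isBigO_exp_smul_mulVec_of_pow_sub_mulVec_eq_zero {A : Matrix n n ℂ} {μ : ℂ} {k : ℕ}
    {v : n → ℂ} {ε : ℝ} (hv : (A - μ • 1) ^ k *ᵥ v = 0) (hμ : μ.re < -ε) :
    (fun t : ℝ => exp (t • A) *ᵥ v) =O[atTop] fun t => Real.exp (-ε * t) := by
  simp_rw [← Complex.coe_smul, exp_smul_mulVec_of_pow_sub_mulVec_eq_zero hv, Finset.smul_sum,
    smul_smul]
  exact IsBigO.fun_sum fun i _ => (isBigO_cexp_mul_pow_div_factorial hμ i).smul_const _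

theorem isBigO_exp_smul_mulVec {A : Matrix n n ℂ} {ε : ℝ} (hA : ∀ μ ∈ spectrum ℂ A, μ.re < -ε)
    (v : n → ℂ) : (fun t : ℝ => exp (t • A) *ᵥ v) =O[atTop] fun t => Real.exp (-ε * t) := by
  let decaying : Submodule ℂ (n → ℂ) :=
    { carrier := {v | (fun t : ℝ => exp (t • A) *ᵥ v) =O[atTop] fun t => Real.exp (-ε * t)}
      add_mem' := fun hu hv => (hu.add hv).congr_left fun _ => (mulVec_add _ _ _).symm
      zero_mem' := (isBigO_zero _ _).congr_left fun _ => (mulVec_zero _).symm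
      smul_mem' := fun c _ hv =>
        (hv.const_smul_left c).congr_left fun _ => (mulVec_smul _ c _).symm }
  suffices ⊤ ≤ decaying from this Submodule.mem_top
  rw [← Module.End.iSup_maxGenEigenspace_eq_top (toLinAlgEquiv' A)]
  refine iSup_le fun μ w hw => ?_
  obtain ⟨k, hk⟩ := (Module.End.mem_maxGenEigenspace _ _ _).1 hw
  replace hk : (A - μ • 1) ^ k *ᵥ w = 0 := by
    rwa [← map_one (toLinAlgEquiv' (n := n) (R := ℂ)), ← map_smul, ← map_sub, ← map_pow,
      toLinAlgEquiv'_apply] at hk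
  rcases eq_or_ne w 0 with rfl | hw0
  · exact decaying.zero_mem
  exact isBigO_exp_smul_mulVec_of_pow_sub_mulVec_eq_zero hk
    (hA μ (mem_spectrum_of_pow_sub_mulVec_eq_zero hk hw0))

theorem isBigO_exp_smul {A : Matrix n n ℂ} {ε : ℝ} (hA : ∀ μ ∈ spectrum ℂ A, μ.re < -ε) :
    (fun t : ℝ => exp (t • A)) =O[atTop] fun t => Real.exp (-ε * t) := by
  have hcols : (fun t : ℝ => (exp (t • A))ᵀ) =O[atTop] fun t => Real.exp (-ε * t) :=
    isBigO_pi.2 fun j => by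
      simpa [mulVec_single_one] using isBigO_exp_smul_mulVec hA (Pi.single j 1)
  exact isBigO_norm_left.1 (by simpa only [norm_transpose] using hcols.norm_left)

end Matrix

theorem IsAsymptoticallyStable.exists_forall_re_lt {m : ℕ} {A : Matrix (Fin m) (Fin m) ℂ}
    (hA : IsAsymptoticallyStable A) : ∃ ε > 0, ∀ μ ∈ spectrum ℂ A, μ.re < -ε := by
  have : ∀ᶠ ε in nhdsWithin (0 : ℝ) (Ioi 0), ∀ μ ∈ spectrum ℂ A, μ.re < -ε :=
    (eventually_all_finite A.finite_spectrum).2 fun μ hμ =>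
      nhdsWithin_le_nhds ((continuous_neg.tendsto' (0 : ℝ) 0 neg_zero).eventually
        (lt_mem_nhds (hA μ hμ)))
  exact (this.and self_mem_nhdsWithin).exists.imp fun ε h => ⟨h.2, h.1⟩

theorem lyapunovSolution_posDef_general {m : ℕ} (A Q : Matrix (Fin m) (Fin m) ℂ)
    (hA : IsAsymptoticallyStable A) (hQ' : Q.PosDef) :
    (lyapunovSolution Q A).PosDef := by
  obtain ⟨ε, hε, hspec⟩ := hA.exists_forall_re_lt
  have hexp := Matrix.isBigO_exp_smul hspec
  have hdecay : (fun t : ℝ => exp (t • A) * Q * (exp (t • A))ᴴ) =O[atTop]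
      fun t => Real.exp (-(2 * ε) * t) :=
    ((hexp.matrix_mul (isBigO_const_const Q one_ne_zero atTop)).matrix_mul
      hexp.matrix_conjTranspose).congr_right fun t => by
        simp only [Pi.mul_apply, mul_one, ← Real.exp_add]; ring_nf
  have hcont : Continuous fun t : ℝ => exp (t • A) :=
    Matrix.continuous_exp.comp (continuous_id.smul continuous_const)
  refine Matrix.PosDef.setIntegral_Ici_of_isBigO_exp_neg (by positivity)
    ((hcont.matrix_mul continuous_const).matrix_mul hcont.matrix_conjTranspose) hdecay fun t => ?_
  exact hQ'.mul_mul_conjTranspose_same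
    (Matrix.vecMul_injective_iff_isUnit.2 (Matrix.isUnit_exp _))

/-- If `A` is asymptotically stable and `Q` is Hermitian positive definite, then the
integral solution of the Lyapunov equation `A P + P Aᴴ + Q = 0` is positive definite. -/
theorem lyapunovSolution_posDef {m : ℕ} (A Q : Matrix (Fin m) (Fin m) ℂ)
    (hA : IsAsymptoticallyStable A) (hQ : Q.IsHermitian) (hQ' : Q.PosDef) :
    (lyapunovSolution Q A).PosDef :=
  lyapunovSolution_posDef_general A Q hA hQ'
end

section
/- Let M be a 2n×2n real symmetric positive definite matrix and let J be the 2n×2n standard symplectic form [[0, I_n],[−I_n, 0]]. Then every eigenvalue of the matrix J·M (over ℂ) is purely imaginary and nonzero, and the set of eigenvalues is closed under complex conjugation (eigenvalues occur in pairs ±iμ with μ > 0). -/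
/-!
Let `J M v = μ v` with `v ≠ 0` and put `w = M v`. Then `w* J w = μ · v* M v`: the left side is
purely imaginary because `J` is skew, and `v* M v` is real and positive, so `Re μ = 0`.
The eigenvalue is nonzero because `J M` is invertible, and the spectrum is closed under
conjugation because `J M` is a real matrix, so its characteristic polynomial is real.
-/

open Matrix

/-- The `2n × 2n` standard symplectic form `J = [[0, Iₙ], [−Iₙ, 0]]`. -/
noncomputable def symplecticJ (n : ℕ) : Matrix (Fin n ⊕ Fin n) (Fin n ⊕ Fin n) ℝ :=
  Matrix.fromBlocks 0 1 (-1) 0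

open scoped ComplexOrder

namespace Matrix

variable {ι : Type*} [Fintype ι]

lemma re_star_dotProduct_map_ofReal_mulVec (M : Matrix ι ι ℝ) (v : ι → ℂ) :
    (star v ⬝ᵥ M.map Complex.ofReal *ᵥ v).re =
      (fun i ↦ (v i).re) ⬝ᵥ M *ᵥ (fun i ↦ (v i).re) +
        (fun i ↦ (v i).im) ⬝ᵥ M *ᵥ (fun i ↦ (v i).im) := by
  simp only [dotProduct, mulVec, map_apply, Pi.star_apply, Finset.mul_sum, Complex.re_sum,
    ← Finset.sum_add_distrib]
  refine Finset.sum_congr rfl fun i _ ↦ Finset.sum_congr rfl fun j _ ↦ ?_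
  simp only [Complex.star_def, Complex.mul_re, Complex.mul_im, Complex.conj_re, Complex.conj_im,
    Complex.ofReal_re, Complex.ofReal_im]
  ring

lemma PosDef.map_ofReal {M : Matrix ι ι ℝ} (hM : M.PosDef) : (M.map Complex.ofReal).PosDef := by
  have hH : (M.map Complex.ofReal).IsHermitian :=
    hM.isHermitian.map _ fun _ ↦ (Complex.conj_ofReal _).symm
  refine .of_dotProduct_mulVec_pos hH fun v hv ↦
    Complex.pos_iff.mpr ⟨?_, (hH.im_star_dotProduct_mulVec_self v).symm⟩
  rw [re_star_dotProduct_map_ofReal_mulVec]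
  have hre := hM.posSemidef.dotProduct_mulVec_nonneg fun i ↦ (v i).re
  have him := hM.posSemidef.dotProduct_mulVec_nonneg fun i ↦ (v i).im
  simp only [star_trivial] at hre him
  obtain hre' | him' : (fun i ↦ (v i).re) ≠ 0 ∨ (fun i ↦ (v i).im) ≠ 0 := by
    contrapose! hv
    exact funext fun i ↦ Complex.ext (congrFun hv.1 i) (congrFun hv.2 i)
  · exact add_pos_of_pos_of_nonneg (by simpa using hM.dotProduct_mulVec_pos hre') him
  · exact add_pos_of_nonneg_of_pos hre (by simpa using hM.dotProduct_mulVec_pos him')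

lemma exists_mulVec_eq_smul_of_mem_spectrum [DecidableEq ι] {K : Type*} [Field K]
    {A : Matrix ι ι K} {μ : K} (hμ : μ ∈ spectrum K A) : ∃ v ≠ 0, A *ᵥ v = μ • v := by
  rw [← spectrum_toLin'] at hμ
  obtain ⟨v, hv⟩ := (Module.End.hasEigenvalue_iff_mem_spectrum.mpr hμ).exists_hasEigenvector
  exact ⟨v, hv.2, hv.apply_eq_smul⟩

lemma re_star_dotProduct_mulVec_self_eq_zero {S : Matrix ι ι ℂ} (hS : Sᴴ = -S) (w : ι → ℂ) :
    (star w ⬝ᵥ S *ᵥ w).re = 0 := by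
  have h : star (star w ⬝ᵥ S *ᵥ w) = star w ⬝ᵥ Sᴴ *ᵥ w := by
    rw [star_dotProduct, star_mulVec, star_star, dotProduct_mulVec]
  rw [hS, neg_mulVec, dotProduct_neg] at h
  have := congrArg Complex.re h
  rw [Complex.star_def, Complex.conj_re, Complex.neg_re] at this
  linarith

theorem re_eq_zero_of_mem_spectrum_mul_posDef [DecidableEq ι] {S H : Matrix ι ι ℂ}
    (hS : Sᴴ = -S) (hH : H.PosDef) {μ : ℂ} (hμ : μ ∈ spectrum ℂ (S * H)) : μ.re = 0 := by
  obtain ⟨v, hv, hSHv⟩ := exists_mulVec_eq_smul_of_mem_spectrum hμ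
  obtain ⟨hc_re, hc_im⟩ := Complex.pos_iff.mp (hH.dotProduct_mulVec_pos hv)
  have hform : star (H *ᵥ v) ⬝ᵥ S *ᵥ (H *ᵥ v) = μ * (star v ⬝ᵥ H *ᵥ v) := by
    rw [mulVec_mulVec, hSHv, dotProduct_smul, smul_eq_mul, star_mulVec, ← dotProduct_mulVec,
      hH.isHermitian.eq]
  have hre := re_star_dotProduct_mulVec_self_eq_zero hS (H *ᵥ v)
  rw [hform, Complex.mul_re, ← hc_im, mul_zero, sub_zero] at hre
  exact (mul_eq_zero.mp hre).resolve_right hc_re.ne'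

theorem star_mem_spectrum_map_ofReal [DecidableEq ι] {A : Matrix ι ι ℝ} {μ : ℂ}
    (hμ : μ ∈ spectrum ℂ (A.map Complex.ofReal)) :
    star μ ∈ spectrum ℂ (A.map Complex.ofReal) := by
  rw [mem_spectrum_iff_isRoot_charpoly] at hμ ⊢
  rw [← Complex.coe_algebraMap, charpoly_map, Polynomial.IsRoot,
    Polynomial.eval_map_algebraMap] at hμ ⊢
  rw [show star μ = Complex.conjAe μ from rfl, Polynomial.aeval_algHom_apply, hμ, map_zero]

end Matrix

lemma symplecticJ_eq_neg_J (n : ℕ) : symplecticJ n = -Matrix.J (Fin n) ℝ := by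
  simp [symplecticJ, Matrix.J, fromBlocks_neg]

lemma transpose_symplecticJ (n : ℕ) : (symplecticJ n)ᵀ = -symplecticJ n := by
  rw [symplecticJ_eq_neg_J, transpose_neg, J_transpose]

lemma isUnit_symplecticJ (n : ℕ) : IsUnit (symplecticJ n) := by
  rw [symplecticJ_eq_neg_J]
  exact ((isUnit_iff_isUnit_det _).mpr (isUnit_det_J _ _)).neg

/-- For a real symmetric positive definite `2n × 2n` matrix `M`, every eigenvalue of
`J M` over `ℂ` is purely imaginary and nonzero, and the spectrum is closed under
complex conjugation. -/
theorem spectrum_J_mul_posDef (n : ℕ) (M : Matrix (Fin n ⊕ Fin n) (Fin n ⊕ Fin n) ℝ)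
    (hM : M.PosDef) :
    ∀ μ ∈ spectrum ℂ ((symplecticJ n * M).map Complex.ofReal),
      μ.re = 0 ∧ μ ≠ 0 ∧
        (starRingEnd ℂ) μ ∈ spectrum ℂ ((symplecticJ n * M).map Complex.ofReal) := by
  intro μ hμ
  have hJ : ((symplecticJ n).map Complex.ofReal)ᴴ = -(symplecticJ n).map Complex.ofReal := by
    rw [← conjTranspose_map _ fun _ ↦ (Complex.conj_ofReal _).symm,
      conjTranspose_eq_transpose_of_trivial, transpose_symplecticJ,
      Matrix.map_neg _ Complex.ofReal_neg]
  have hunit : IsUnit ((symplecticJ n * M).map Complex.ofReal) :=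
    ((isUnit_symplecticJ n).mul hM.isUnit).map Complex.ofRealHom.mapMatrix
  refine ⟨?_, ?_, star_mem_spectrum_map_ofReal hμ⟩
  · have hmul : (symplecticJ n * M).map Complex.ofReal =
        (symplecticJ n).map Complex.ofReal * M.map Complex.ofReal :=
      Matrix.map_mul (f := Complex.ofRealHom)
    rw [hmul] at hμ
    exact re_eq_zero_of_mem_spectrum_mul_posDef hJ hM.map_ofReal hμ
  · rintro rfl
    exact spectrum.zero_notMem ℂ hunit hμ
end
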